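/- Let G = G₁ □ ⋯ □ G_d be a cartesian product and suppose each G_i² has a proper integer colouring c_i such that all edges of G_i have span lying in an interval I_i, where the intervals I₁,…,I_d of positive integers are pairwise disjoint. Then c(v₁,…,v_d) := Σ_{i=1}^d c_i(v_i) is a proper colouring of G². -/

import Mathlib

/-- The square of a graph: two distinct vertices are adjacent if they are
adjacent in `G` or have a common neighbour in `G`. -/
def SimpleGraph.square' {V : Type*} (G : SimpleGraph V) : SimpleGraph V where
  Adj u v := u ≠ v ∧ (G.Adj u v ∨ ∃ w, G.Adj u w ∧ G.Adj w v)
  symm := ⟨fun u v => by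
    rintro ⟨hne, h | ⟨w, h1, h2⟩⟩
    · exact ⟨hne.symm, Or.inl h.symm⟩
    · exact ⟨hne.symm, Or.inr ⟨w, h2.symm, h1.symm⟩⟩⟩
  loopless := ⟨fun u => by rintro ⟨hne, -⟩; exact hne rfl⟩

/-- The cartesian product of a family of graphs. -/
def boxProdPi {d : ℕ} {V : Fin d → Type*} (G : ∀ i, SimpleGraph (V i)) :
    SimpleGraph (∀ i, V i) where
  Adj u v := ∃ i, (G i).Adj (u i) (v i) ∧ ∀ j, j ≠ i → u j = v j
  symm := ⟨fun u v => by
    rintro ⟨i, h, hj⟩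
    exact ⟨i, h.symm, fun j hji => (hj j hji).symm⟩⟩
  loopless := ⟨fun u => by rintro ⟨i, h, -⟩; exact (G i).loopless.irrefl _ h⟩

section SumOfCoordinates

variable {ι M : Type*} [Fintype ι] [AddCommGroup M] {V : ι → Type*}

lemma Fintype.sum_sub_sum_eq_of_forall_ne (c : ∀ i, V i → M) {x y : ∀ i, V i} (i : ι)
    (h : ∀ k, k ≠ i → x k = y k) :
    ∑ k, c k (x k) - ∑ k, c k (y k) = c i (x i) - c i (y i) := by
  rw [← Finset.sum_sub_distrib]
  exact Fintype.sum_eq_single i fun k hk => by rw [h k hk, sub_self]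

lemma Fintype.sum_eq_sum_iff_of_forall_ne (c : ∀ i, V i → M) {x y : ∀ i, V i} (i : ι)
    (h : ∀ k, k ≠ i → x k = y k) :
    ∑ k, c k (x k) = ∑ k, c k (y k) ↔ c i (x i) = c i (y i) := by
  rw [← sub_eq_zero, sum_sub_sum_eq_of_forall_ne c i h, sub_eq_zero]

end SumOfCoordinates

section boxProdPi

variable {d : ℕ} {V : Fin d → Type*} {G : ∀ i, SimpleGraph (V i)}

lemma boxProdPi_square'_adj_cases {x y : ∀ i, V i} (hxy : (boxProdPi G).square'.Adj x y) :
    (∃ i, (G i).square'.Adj (x i) (y i) ∧ ∀ k, k ≠ i → x k = y k) ∨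
      ∃ w : ∀ i, V i, ∃ i j, i ≠ j ∧
        ((G i).Adj (x i) (w i) ∧ ∀ k, k ≠ i → x k = w k) ∧
        ((G j).Adj (w j) (y j) ∧ ∀ k, k ≠ j → w k = y k) := by
  obtain ⟨hne, ⟨i, hi, hagree⟩ | ⟨w, ⟨i, hxw, hxw'⟩, ⟨j, hwy, hwy'⟩⟩⟩ := hxy
  · exact .inl ⟨i, ⟨hi.ne, .inl hi⟩, hagree⟩
  obtain rfl | hij := eq_or_ne i j
  · have hagree : ∀ k, k ≠ i → x k = y k := fun k hk => (hxw' k hk).trans (hwy' k hk)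
    have hne_i : x i ≠ y i := fun h =>
      hne <| funext fun k => (eq_or_ne k i).elim (fun hk => hk ▸ h) (hagree k)
    exact .inl ⟨i, ⟨hne_i, .inr ⟨w i, hxw, hwy⟩⟩, hagree⟩
  · exact .inr ⟨w, i, j, hij, ⟨hxw, hxw'⟩, ⟨hwy, hwy'⟩⟩

end boxProdPi

theorem boxProdPi_sum_colouring_general {d : ℕ} {V : Fin d → Type*}
    (G : ∀ i, SimpleGraph (V i)) (c : ∀ i, V i → ℤ)
    (a b : Fin d → ℤ)
    (hdisj : Pairwise fun i j => Disjoint (Set.Icc (a i) (b i)) (Set.Icc (a j) (b j)))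
    (hproper : ∀ i, ∀ x y, (G i).square'.Adj x y → c i x ≠ c i y)
    (hspan : ∀ i, ∀ x y, (G i).Adj x y → |c i x - c i y| ∈ Set.Icc (a i) (b i)) :
    ∀ x y, (boxProdPi G).square'.Adj x y →
      (∑ i, c i (x i)) ≠ (∑ i, c i (y i)) := by
  intro x y hxy heq
  rcases boxProdPi_square'_adj_cases hxy with
    ⟨i, hi, hagree⟩ | ⟨w, i, j, hij, ⟨hxw, hxw'⟩, ⟨hwy, hwy'⟩⟩
  · exact hproper i _ _ hi ((Fintype.sum_eq_sum_iff_of_forall_ne c i hagree).1 heq)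
  -- The two steps change the colour sum by opposite amounts, so they have equal spans.
  have hstep_i := Fintype.sum_sub_sum_eq_of_forall_ne c i hxw'
  have hstep_j := Fintype.sum_sub_sum_eq_of_forall_ne c j hwy'
  have hspan_eq : |c i (x i) - c i (w i)| = |c j (w j) - c j (y j)| := by
    rw [← abs_neg (c j _ - _)]
    congr 1
    linarith
  exact Set.disjoint_left.mp (hdisj hij) (hspan_eq ▸ hspan i _ _ hxw) (hspan j _ _ hwy)

theorem boxProdPi_sum_colouring {d : ℕ} {V : Fin d → Type*}
    (G : ∀ i, SimpleGraph (V i)) (c : ∀ i, V i → ℤ)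
    (a b : Fin d → ℤ) (ha : ∀ i, 0 < a i)
    (hdisj : Pairwise fun i j => Disjoint (Set.Icc (a i) (b i)) (Set.Icc (a j) (b j)))
    (hproper : ∀ i, ∀ x y, (G i).square'.Adj x y → c i x ≠ c i y)
    (hspan : ∀ i, ∀ x y, (G i).Adj x y → |c i x - c i y| ∈ Set.Icc (a i) (b i)) :
    ∀ x y, (boxProdPi G).square'.Adj x y →
      (∑ i, c i (x i)) ≠ (∑ i, c i (y i)) :=
  boxProdPi_sum_colouring_general G c a b hdisj hproper hspan
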